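/- Let σ > 0 and Δ > 0. Then: (i) V(σ·√n, Δ)/√n → σ/√(2π) as n → ∞, so the multi-dimensional catalytic value grows at rate √n in the number n of independent uncertain attributes; and (ii) for every real n > 0, the function n ↦ V(σ·√n, Δ) has derivative φ(−Δ/(σ·√n))·σ/(2·√n) at n, which is strictly positive, so the catalytic value is increasing in n with diminishing marginal returns. (Multi-dimensional catalytic value, Proposition 12.) -/

import Mathlib

open MeasureTheory

/-- The standard normal density `φ`. -/
noncomputable def stdNormalPDF (x : ℝ) : ℝ :=
  (Real.sqrt (2 * Real.pi))⁻¹ * Real.exp (-x ^ 2 / 2)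

/-- The standard normal CDF `Φ`. -/
noncomputable def stdNormalCDF (x : ℝ) : ℝ :=
  ∫ t in Set.Iic x, stdNormalPDF t

/-- The catalytic value `V(σ, Δ) = -Δ·Φ(-Δ/σ) + σ·φ(-Δ/σ)`. -/
noncomputable def catalyticValue (σ Δ : ℝ) : ℝ :=
  -Δ * stdNormalCDF (-Δ / σ) + σ * stdNormalPDF (-Δ / σ)


/-! `V(·, Δ)` is the expected positive part of a centred normal of standard deviation `s`, shifted
by `-Δ`; differentiating it in `s`, the terms coming from the argument `-Δ/s` cancel because
`Φ' = φ` and `φ'(u) = -u φ(u)`, leaving `∂V/∂s = φ(-Δ/s)`. The chain rule through `s = σ√n` then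
gives the derivative in `n`. For the limit, `V(s, Δ)/s = -Δ Φ(-Δ/s)/s + φ(-Δ/s) → φ(0)` as
`s → ∞`, the first term vanishing because `Φ(-Δ/s) → Φ(0)`. -/

open Filter Topology

theorem hasDerivAt_integral_Iic {E : Type*} [NormedAddCommGroup E] [NormedSpace ℝ E]
    [CompleteSpace E] {f : ℝ → E} (hf : Integrable f) {x : ℝ} (hfx : ContinuousAt f x) :
    HasDerivAt (fun y => ∫ t in Set.Iic y, f t) (f x) x := by
  have h_split : (fun y => ∫ t in Set.Iic y, f t) =
      fun y => (∫ t in Set.Iic 0, f t) + ∫ t in (0 : ℝ)..y, f t := by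
    ext y
    rw [← intervalIntegral.integral_Iic_sub_Iic hf.integrableOn hf.integrableOn,
      add_sub_cancel]
  rw [h_split]
  exact (intervalIntegral.integral_hasDerivAt_right hf.intervalIntegrable
    hf.aestronglyMeasurable.stronglyMeasurableAtFilter hfx).const_add _

lemma stdNormalPDF_pos (x : ℝ) : 0 < stdNormalPDF x := by
  unfold stdNormalPDF
  positivity

lemma stdNormalPDF_zero : stdNormalPDF 0 = 1 / Real.sqrt (2 * Real.pi) := by
  simp [stdNormalPDF]

lemma continuous_stdNormalPDF : Continuous stdNormalPDF := by
  unfold stdNormalPDF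
  fun_prop

lemma integrable_stdNormalPDF : Integrable stdNormalPDF := by
  have h := (integrable_exp_neg_mul_sq one_half_pos).const_mul (Real.sqrt (2 * Real.pi))⁻¹
  refine h.congr (ae_of_all _ fun x => ?_)
  simp only [stdNormalPDF]
  ring_nf

lemma hasDerivAt_stdNormalPDF (x : ℝ) :
    HasDerivAt stdNormalPDF (-x * stdNormalPDF x) x := by
  have h_exponent : HasDerivAt (fun x : ℝ => -x ^ 2 / 2) (-x) x := by
    refine ((hasDerivAt_pow 2 x).neg.div_const 2).congr_deriv ?_
    ring
  refine (h_exponent.exp.const_mul (Real.sqrt (2 * Real.pi))⁻¹).congr_deriv ?_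
  rw [stdNormalPDF]
  ring

lemma hasDerivAt_stdNormalCDF (x : ℝ) : HasDerivAt stdNormalCDF (stdNormalPDF x) x :=
  hasDerivAt_integral_Iic integrable_stdNormalPDF continuous_stdNormalPDF.continuousAt

lemma continuous_stdNormalCDF : Continuous stdNormalCDF :=
  continuous_iff_continuousAt.2 fun x => (hasDerivAt_stdNormalCDF x).continuousAt

lemma hasDerivAt_catalyticValue (Δ : ℝ) {s : ℝ} (hs : s ≠ 0) :
    HasDerivAt (fun s => catalyticValue s Δ) (stdNormalPDF (-Δ / s)) s := by
  have h_arg : HasDerivAt (fun s : ℝ => -Δ / s) (Δ / s ^ 2) s := by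
    simp only [div_eq_mul_inv]
    refine ((hasDerivAt_inv hs).const_mul (-Δ)).congr_deriv ?_
    ring
  have h := ((hasDerivAt_stdNormalCDF _).comp s h_arg).const_mul (-Δ) |>.add
    ((hasDerivAt_id s).mul ((hasDerivAt_stdNormalPDF _).comp s h_arg))
  refine h.congr_deriv ?_
  simp only [Function.comp_apply, id]
  field_simp
  ring

lemma tendsto_catalyticValue_div_atTop (Δ : ℝ) :
    Tendsto (fun s => catalyticValue s Δ / s) atTop (𝓝 (stdNormalPDF 0)) := by
  have h_arg : Tendsto (fun s : ℝ => -Δ / s) atTop (𝓝 0) :=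
    tendsto_const_nhds.div_atTop tendsto_id
  have h_cdf_term : Tendsto (fun s => -Δ * stdNormalCDF (-Δ / s) / s) atTop (𝓝 0) :=
    ((continuous_stdNormalCDF.tendsto 0).comp h_arg |>.const_mul (-Δ)).div_atTop tendsto_id
  have h_pdf_term : Tendsto (fun s => stdNormalPDF (-Δ / s)) atTop (𝓝 (stdNormalPDF 0)) :=
    (continuous_stdNormalPDF.tendsto 0).comp h_arg
  rw [← zero_add (stdNormalPDF 0)]
  refine (h_cdf_term.add h_pdf_term).congr' ?_
  filter_upwards [eventually_ne_atTop 0] with s hs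
  simp only [catalyticValue]
  field_simp

theorem multidimensional_catalytic_value_general (σ Δ : ℝ) (hσ : 0 < σ) :
    Tendsto (fun n : ℝ => catalyticValue (σ * Real.sqrt n) Δ / Real.sqrt n)
      atTop (𝓝 (σ / Real.sqrt (2 * Real.pi))) ∧
    ∀ n : ℝ, 0 < n →
      HasDerivAt (fun m : ℝ => catalyticValue (σ * Real.sqrt m) Δ)
        (stdNormalPDF (-Δ / (σ * Real.sqrt n)) * σ / (2 * Real.sqrt n)) n ∧
      0 < stdNormalPDF (-Δ / (σ * Real.sqrt n)) * σ / (2 * Real.sqrt n) := by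
  refine ⟨?_, fun n hn => ⟨?_, ?_⟩⟩
  · have h_scale : Tendsto (fun n : ℝ => σ * Real.sqrt n) atTop atTop :=
      Real.tendsto_sqrt_atTop.const_mul_atTop hσ
    have h := ((tendsto_catalyticValue_div_atTop Δ).comp h_scale).const_mul σ
    rw [stdNormalPDF_zero, mul_one_div] at h
    refine h.congr' ?_
    filter_upwards [eventually_gt_atTop 0] with n hn
    have : Real.sqrt n ≠ 0 := (Real.sqrt_pos.2 hn).ne'
    simp only [Function.comp]
    field_simp
  · have h_scale := (Real.hasDerivAt_sqrt hn.ne').const_mul σ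
    refine ((hasDerivAt_catalyticValue Δ (by positivity)).comp n h_scale).congr_deriv ?_
    ring
  · have := stdNormalPDF_pos (-Δ / (σ * Real.sqrt n))
    have := Real.sqrt_pos.2 hn
    positivity

/-- Multi-dimensional catalytic value (Proposition 12): (i) `V(σ√n, Δ)/√n → σ/√(2π)`
as `n → ∞`; (ii) for every real `n > 0`, `n ↦ V(σ√n, Δ)` has strictly positive
derivative `φ(-Δ/(σ√n))·σ/(2√n)` at `n`. -/
theorem multidimensional_catalytic_value (σ Δ : ℝ) (hσ : 0 < σ) (hΔ : 0 < Δ) :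
    Tendsto (fun n : ℝ => catalyticValue (σ * Real.sqrt n) Δ / Real.sqrt n)
      atTop (𝓝 (σ / Real.sqrt (2 * Real.pi))) ∧
    ∀ n : ℝ, 0 < n →
      HasDerivAt (fun m : ℝ => catalyticValue (σ * Real.sqrt m) Δ)
        (stdNormalPDF (-Δ / (σ * Real.sqrt n)) * σ / (2 * Real.sqrt n)) n ∧
      0 < stdNormalPDF (-Δ / (σ * Real.sqrt n)) * σ / (2 * Real.sqrt n) :=
  multidimensional_catalytic_value_general σ Δ hσ
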